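/- Let OPT' be an optimal schedule (with respect to pseudo-cost) of a job set with at most ŷ densities and all release dates at most R, where all jobs released by any time r can be rescheduled within an interval of length r·ŷ·(1+δ)/δ^{23} starting at any time after r. Then there exists an optimal schedule in which no job completes after time ŷ·R/δ^{25}. -/

import Mathlib

open Finset

/-- feasibility of a schedule with release dates `r`, sizes `p`, speeds `s`. -/
def Feasible (n m : ℕ) (r p : Fin n → ℝ) (s : Fin m → ℝ)
    (M : Fin n → Fin m) (C : Fin n → ℝ) : Prop :=
  (∀ j, r j + p j / s (M j) ≤ C j) ∧
    ∀ j k, j ≠ k → M j = M k →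
      C j ≤ C k - p k / s (M k) ∨ C k ≤ C j - p j / s (M j)

/-- total pseudo-cost: a job whose completion time lies in `[(1+δ)^i,(1+δ)^{i+1})`
contributes its weight times `(1+δ)^{i+1}`. -/
noncomputable def pseudoCost (n : ℕ) (δ : ℝ) (w C : Fin n → ℝ) : ℝ :=
  ∑ j, w j * (1 + δ) ^ (⌊Real.logb (1 + δ) (C j)⌋ + 1)

/-!
Put `b = 1 + δ`, `R' = ŷR/δ²⁴` and let `T = bᶥ` be the power of `b` with `bR' < T ≤ b²R'`.
Since `T > R`, the jobs of an optimal schedule completing after `T` can be moved into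
`[T, T + δbR')`, which lies inside the pseudo-cost bucket `[T, bT)` because `δbR' < δT`.
Every moved job used to complete in that bucket or a later one, so no pseudo-cost increases
and the new schedule is still optimal; all its jobs complete by `bT ≤ b³R' ≤ R'/δ = ŷR/δ²⁵`, using `δ(1 + δ)³ ≤ 1`.
-/

namespace Real

lemma floor_logb_eq_of_mem_Ico {b x : ℝ} {ι : ℤ} (hb : 1 < b)
    (hx : x ∈ Set.Ico (b ^ ι) (b ^ (ι + 1))) : ⌊logb b x⌋ = ι := by
  have hx0 : 0 < x := (zpow_pos (by linarith) ι).trans_le hx.1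
  rw [Int.floor_eq_iff, le_logb_iff_rpow_le hb hx0, logb_lt_iff_lt_rpow hb hx0,
    rpow_intCast, ← Int.cast_one, ← Int.cast_add, rpow_intCast]
  exact hx

lemma le_floor_logb_of_zpow_le {b x : ℝ} {ι : ℤ} (hb : 1 < b) (hx : b ^ ι ≤ x) :
    ι ≤ ⌊logb b x⌋ := by
  have hx0 : 0 < x := (zpow_pos (by linarith) ι).trans_le hx
  rwa [Int.le_floor, le_logb_iff_rpow_le hb hx0, rpow_intCast]

end Real

lemma pseudoCost_le_of_moved_into_bucket {n : ℕ} {δ : ℝ} (hδ : 0 < δ) {w C C' : Fin n → ℝ}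
    (hw : ∀ j, 0 ≤ w j) (ι : ℤ) (hkeep : ∀ j, C j ≤ (1 + δ) ^ ι → C' j = C j)
    (hmove : ∀ j, (1 + δ) ^ ι < C j → C' j ∈ Set.Ico ((1 + δ) ^ ι) ((1 + δ) ^ (ι + 1))) :
    pseudoCost n δ w C' ≤ pseudoCost n δ w C := by
  have hb : 1 < 1 + δ := by linarith
  refine sum_le_sum fun j _ => mul_le_mul_of_nonneg_left ?_ (hw j)
  by_cases hj : C j ≤ (1 + δ) ^ ι
  · rw [hkeep j hj]
  · replace hj := not_le.mp hj
    rw [Real.floor_logb_eq_of_mem_Ico hb (hmove j hj)]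
    exact zpow_le_zpow_right₀ hb.le (by linarith [Real.le_floor_logb_of_zpow_le hb hj.le])

lemma exists_optimal_completing_by {n m : ℕ} {δ : ℝ} (hδ : 0 < δ) {r p w : Fin n → ℝ}
    {s : Fin m → ℝ} (hp : ∀ j, 0 < p j) (hw : ∀ j, 0 ≤ w j) (hs : ∀ i, 0 < s i)
    (hopt : ∃ M C, Feasible n m r p s M C ∧
      ∀ M' C', Feasible n m r p s M' C' → pseudoCost n δ w C ≤ pseudoCost n δ w C')
    (ι : ℤ) (L : ℝ) (hL : L < δ * (1 + δ) ^ ι)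
    (hre : ∀ M C, Feasible n m r p s M C →
      ∃ M' C', Feasible n m r p s M' C' ∧
        (∀ j, C j ≤ (1 + δ : ℝ) ^ ι → M' j = M j ∧ C' j = C j) ∧
        (∀ j, (1 + δ : ℝ) ^ ι < C j →
          (1 + δ : ℝ) ^ ι ≤ C' j - p j / s (M' j) ∧ C' j ≤ (1 + δ : ℝ) ^ ι + L)) :
    ∃ M C, Feasible n m r p s M C ∧
      (∀ M' C', Feasible n m r p s M' C' → pseudoCost n δ w C ≤ pseudoCost n δ w C') ∧
      ∀ j, C j ≤ (1 + δ) ^ (ι + 1) := by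
  obtain ⟨M, C, hfeas, hoptC⟩ := hopt
  obtain ⟨M', C', hfeas', hkeep, hmove⟩ := hre M C hfeas
  have hnext : (1 + δ) ^ (ι + 1) = (1 + δ) ^ ι + δ * (1 + δ) ^ ι := by
    rw [zpow_add_one₀ (by linarith)]; ring
  have hbucket : ∀ j, (1 + δ) ^ ι < C j →
      C' j ∈ Set.Ico ((1 + δ) ^ ι) ((1 + δ) ^ (ι + 1)) := by
    intro j hj
    obtain ⟨hstart, hend⟩ := hmove j hj
    have : 0 < p j / s (M' j) := div_pos (hp j) (hs _)
    constructor <;> linarith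
  have hcost : pseudoCost n δ w C' ≤ pseudoCost n δ w C :=
    pseudoCost_le_of_moved_into_bucket hδ hw ι (fun j hj => (hkeep j hj).2) hbucket
  refine ⟨M', C', hfeas', fun M'' C'' hf => hcost.trans (hoptC M'' C'' hf), fun j => ?_⟩
  by_cases hj : C j ≤ (1 + δ) ^ ι
  · have : 0 < δ * (1 + δ) ^ ι := by positivity
    rw [(hkeep j hj).2]; linarith
  · exact (hbucket j (not_le.mp hj)).2.le

lemma mul_one_add_pow_three_le_one {δ : ℝ} (hδ0 : 0 < δ) (hδ : δ ≤ 1 / 36) :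
    δ * (1 + δ) ^ 3 ≤ 1 := by
  calc δ * (1 + δ) ^ 3 ≤ 1 / 36 * (1 + 1 / 36) ^ 3 := by gcongr
    _ ≤ 1 := by norm_num

theorem optimal_schedule_bounded_horizon_general (n m : ℕ) (δ : ℝ)
    (hδ0 : 0 < δ) (hδ : δ ≤ 1 / 36)
    (r p w : Fin n → ℝ) (s : Fin m → ℝ)
    (hp : ∀ j, 0 < p j) (hw : ∀ j, 0 ≤ w j) (hs : ∀ i, 0 < s i)
    (yhat : ℕ) (hyhat : 1 ≤ yhat) (R : ℝ) (hR : 0 < R)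
    (hopt : ∃ M C, Feasible n m r p s M C ∧
      ∀ M' C', Feasible n m r p s M' C' →
        pseudoCost n δ w C ≤ pseudoCost n δ w C')
    (hre : ∀ M C, Feasible n m r p s M C → ∀ ι : ℤ, R < (1 + δ : ℝ) ^ ι →
      ∃ M' C', Feasible n m r p s M' C' ∧
        (∀ j, C j ≤ (1 + δ : ℝ) ^ ι → M' j = M j ∧ C' j = C j) ∧
        (∀ j, (1 + δ : ℝ) ^ ι < C j →
          (1 + δ : ℝ) ^ ι ≤ C' j - p j / s (M' j) ∧
          C' j ≤ (1 + δ : ℝ) ^ ι + R * yhat * (1 + δ) / δ ^ 23)) :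
    ∃ M C, Feasible n m r p s M C ∧
      (∀ M' C', Feasible n m r p s M' C' →
        pseudoCost n δ w C ≤ pseudoCost n δ w C') ∧
      ∀ j, C j ≤ yhat * R / δ ^ 25 := by
  set R' : ℝ := yhat * R / δ ^ 24 with hR'
  have hyhat1 : (1 : ℝ) ≤ yhat := by exact_mod_cast hyhat
  have hRR' : R ≤ R' := by
    rw [le_div_iff₀ (by positivity)]
    nlinarith [pow_le_one₀ hδ0.le (by linarith : δ ≤ 1) (n := 24)]
  obtain ⟨k, hk_le, hk_lt⟩ :=
    exists_mem_Ico_zpow (by positivity : 0 < (1 + δ) * R') (by linarith : 1 < 1 + δ)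
  have hup : (1 + δ) ^ (k + 1 + 1) ≤ (1 + δ) ^ 3 * R' := calc
    (1 + δ) ^ (k + 1 + 1) = (1 + δ) ^ 2 * (1 + δ) ^ k := by
      rw [zpow_add_one₀ (by positivity), zpow_add_one₀ (by positivity)]; ring
    _ ≤ (1 + δ) ^ 2 * ((1 + δ) * R') := by gcongr
    _ = (1 + δ) ^ 3 * R' := by ring
  have hRT : R < (1 + δ) ^ (k + 1) := by nlinarith
  have hlen : R * yhat * (1 + δ) / δ ^ 23 = δ * ((1 + δ) * R') := by
    rw [hR']; field_simp
  obtain ⟨M, C, hfeas, hoptC, hC⟩ := exists_optimal_completing_by hδ0 hp hw hs hopt (k + 1)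
    (R * yhat * (1 + δ) / δ ^ 23) (by rw [hlen]; gcongr)
    fun M C hf => hre M C hf (k + 1) hRT
  refine ⟨M, C, hfeas, hoptC, fun j => (hC j).trans (hup.trans ?_)⟩
  have : yhat * R / δ ^ 25 = R' / δ := by rw [hR']; field_simp
  rw [this, le_div_iff₀ hδ0]
  nlinarith [mul_one_add_pow_three_le_one hδ0 hδ, (by positivity : (0 : ℝ) ≤ R')]

/-- if an optimal (w.r.t. pseudo-cost) feasible schedule exists, at most
`yhat` densities occur, all release dates are at most `R`, and for every feasible
schedule and every power `(1+δ)^ι > R` the jobs completing after `(1+δ)^ι` can be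
rescheduled within an interval of length `R·yhat(1+δ)/δ²³` starting at `(1+δ)^ι`
(keeping the rest of the schedule), then there exists an optimal feasible schedule in
which no job completes after time `yhat·R/δ²⁵`. -/
theorem optimal_schedule_bounded_horizon (n m : ℕ) (δ : ℝ)
    (hδ0 : 0 < δ) (hδ : δ ≤ 1 / 36)
    (r p w : Fin n → ℝ) (s : Fin m → ℝ)
    (hp : ∀ j, 0 < p j) (hw : ∀ j, 0 ≤ w j) (hs : ∀ i, 0 < s i)
    (yhat : ℕ) (hyhat : 1 ≤ yhat) (R : ℝ) (hR : 0 < R) (hr : ∀ j, 0 < r j ∧ r j ≤ R)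
    (hopt : ∃ M C, Feasible n m r p s M C ∧
      ∀ M' C', Feasible n m r p s M' C' →
        pseudoCost n δ w C ≤ pseudoCost n δ w C')
    (hre : ∀ M C, Feasible n m r p s M C → ∀ ι : ℤ, R < (1 + δ : ℝ) ^ ι →
      ∃ M' C', Feasible n m r p s M' C' ∧
        (∀ j, C j ≤ (1 + δ : ℝ) ^ ι → M' j = M j ∧ C' j = C j) ∧
        (∀ j, (1 + δ : ℝ) ^ ι < C j →
          (1 + δ : ℝ) ^ ι ≤ C' j - p j / s (M' j) ∧
          C' j ≤ (1 + δ : ℝ) ^ ι + R * yhat * (1 + δ) / δ ^ 23)) :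
    ∃ M C, Feasible n m r p s M C ∧
      (∀ M' C', Feasible n m r p s M' C' →
        pseudoCost n δ w C ≤ pseudoCost n δ w C') ∧
      ∀ j, C j ≤ yhat * R / δ ^ 25 :=
  optimal_schedule_bounded_horizon_general n m δ hδ0 hδ r p w s hp hw hs yhat hyhat R hR hopt hre
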